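/- Let X ∈ ℝ^{d×n}, let M be a symmetric positive semidefinite d×d matrix with XX^T + M positive definite and λ_max(M) > 0, suppose X satisfies the SSS property at level k with constant Λ_k > 0, and let w*, w₀ ∈ ℝ^d with g = X^T (XX^T + M)^{-1} M (w* − w₀). If ε ∈ ℝ^n satisfies ‖ε_S‖₂ ≤ γ · max_{|S'| = k} ‖g_{S'}‖₂ for all S ⊆ {1,…,n} with |S| ≤ k, where γ > 0, then ‖w* − w₀‖₂ ≥ (λ_min(XX^T + M) / (γ · √Λ_k · λ_max(M))) · max_{|S| = k} ‖ε_S‖₂. -/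

import Mathlib

open Matrix

-- Largest eigenvalue of a symmetric real matrix (junk value `0` if not Hermitian).
open Classical in
noncomputable def lamMax {d : ℕ} (A : Matrix (Fin d) (Fin d) ℝ) : ℝ :=
  if h : A.IsHermitian then ⨆ i, h.eigenvalues i else 0

-- Smallest eigenvalue of a symmetric real matrix (junk value `0` if not Hermitian).
open Classical in
noncomputable def lamMin {d : ℕ} (A : Matrix (Fin d) (Fin d) ℝ) : ℝ :=
  if h : A.IsHermitian then ⨅ i, h.eigenvalues i else 0

-- Euclidean norm of a vector.
noncomputable def norm2 {n : ℕ} (v : Fin n → ℝ) : ℝ := Real.sqrt (∑ i, v i ^ 2)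

-- Support of a vector, as a `Finset`.
open Classical in
noncomputable def supp {n : ℕ} (v : Fin n → ℝ) : Finset (Fin n) :=
  Finset.univ.filter (fun i => v i ≠ 0)

-- `restrict S v` equals `v` on `S` and `0` outside `S`.
open Classical in
noncomputable def restrict {n : ℕ} (S : Finset (Fin n)) (v : Fin n → ℝ) : Fin n → ℝ :=
  fun i => if i ∈ S then v i else 0

-- Hard thresholding: keep the `k` coordinates of largest absolute value
-- (ties broken by the fixed index ordering), zero out the rest.
open Classical in
noncomputable def HT {n : ℕ} (k : ℕ) (r : Fin n → ℝ) : Fin n → ℝ := fun i =>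
  if (Finset.univ.filter (fun j => |r i| < |r j| ∨ (|r j| = |r i| ∧ j < i))).card < k
  then r i else 0

-- `gramOn X S = X_S * (X_S)ᵀ`, the Gram matrix of the columns of `X` indexed by `S`.
def gramOn {d n : ℕ} (X : Matrix (Fin d) (Fin n) ℝ) (S : Finset (Fin n)) :
    Matrix (Fin d) (Fin d) ℝ :=
  fun a b => ∑ i ∈ S, X a i * X b i

/- ## Auxiliary lemmas -/

lemma sq_norm2 {n : ℕ} (v : Fin n → ℝ) : norm2 v ^ 2 = ∑ i, v i ^ 2 :=
  Real.sq_sqrt (by positivity)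

lemma norm2_nonneg {n : ℕ} (v : Fin n → ℝ) : 0 ≤ norm2 v := Real.sqrt_nonneg _

/-- coordinates in the eigenbasis -/
lemma exists_coords {d : ℕ} {A : Matrix (Fin d) (Fin d) ℝ} (hA : A.IsHermitian)
    (x : Fin d → ℝ) :
    ∃ y : Fin d → ℝ, (∑ i, y i ^ 2 = ∑ i, x i ^ 2) ∧
      (x ⬝ᵥ A *ᵥ x = ∑ i, hA.eigenvalues i * y i ^ 2) ∧
      (∑ i, (A *ᵥ x) i ^ 2 = ∑ i, (hA.eigenvalues i) ^ 2 * y i ^ 2) := by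
  classical
  set U : Matrix (Fin d) (Fin d) ℝ := (hA.eigenvectorUnitary : Matrix (Fin d) (Fin d) ℝ) with hU
  have hUmem : U ∈ unitaryGroup (Fin d) ℝ := hA.eigenvectorUnitary.2
  have hstar : star U = Uᵀ := by
    rw [star_eq_conjTranspose, conjTranspose_eq_transpose_of_trivial]
  have hUU : U * Uᵀ = 1 := by rw [← hstar]; exact (mem_unitaryGroup_iff).mp hUmem
  have hUU' : Uᵀ * U = 1 := by rw [← hstar]; exact (mem_unitaryGroup_iff').mp hUmem
  set y : Fin d → ℝ := Uᵀ *ᵥ x with hy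
  have hvm : ∀ z : Fin d → ℝ, z ᵥ* U = Uᵀ *ᵥ z := fun z => (mulVec_transpose U z).symm
  -- isometry of U
  have iso : ∀ z : Fin d → ℝ, ∑ i, (U *ᵥ z) i ^ 2 = ∑ i, z i ^ 2 := by
    intro z
    have h1 : (U *ᵥ z) ⬝ᵥ (U *ᵥ z) = z ⬝ᵥ z := by
      rw [dotProduct_mulVec, hvm, mulVec_mulVec, hUU', one_mulVec]
    simpa [dotProduct, pow_two] using h1
  have hsp : A = U * diagonal (RCLike.ofReal ∘ hA.eigenvalues) * star U := hA.spectral_theorem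
  have hsp' : A = U * diagonal hA.eigenvalues * Uᵀ := by
    rw [hstar] at hsp; convert hsp using 2; rfl
  set D : Matrix (Fin d) (Fin d) ℝ := diagonal hA.eigenvalues with hD
  have hAx : A *ᵥ x = U *ᵥ (D *ᵥ y) := by
    rw [hy, mulVec_mulVec, mulVec_mulVec, ← hsp']
  refine ⟨y, ?_, ?_, ?_⟩
  · have : ∑ i, (U *ᵥ y) i ^ 2 = ∑ i, y i ^ 2 := iso y
    rw [← this, hy, mulVec_mulVec, hUU, one_mulVec]
  · rw [hAx, dotProduct_mulVec, hvm, ← hy]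
    simp only [dotProduct]
    exact Finset.sum_congr rfl fun i _ => by
      rw [mulVec_diagonal]; ring
  · rw [hAx, iso]
    exact Finset.sum_congr rfl fun i _ => by
      rw [mulVec_diagonal]; ring

section Bounds
variable {d : ℕ} {A : Matrix (Fin d) (Fin d) ℝ}

lemma eig_le_lamMax (hA : A.IsHermitian) (i : Fin d) : hA.eigenvalues i ≤ lamMax A := by
  rw [lamMax, dif_pos hA]
  exact le_ciSup (Set.Finite.bddAbove (Set.finite_range _)) i

lemma lamMin_le_eig (hA : A.IsHermitian) (i : Fin d) : lamMin A ≤ hA.eigenvalues i := by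
  rw [lamMin, dif_pos hA]
  exact ciInf_le (Set.Finite.bddBelow (Set.finite_range _)) i

lemma quad_le_lamMax (hA : A.IsHermitian) (x : Fin d → ℝ) :
    x ⬝ᵥ A *ᵥ x ≤ lamMax A * norm2 x ^ 2 := by
  obtain ⟨y, hy1, hy2, _⟩ := exists_coords hA x
  rw [hy2, sq_norm2, ← hy1, Finset.mul_sum]
  exact Finset.sum_le_sum fun i _ => by
    have := eig_le_lamMax hA i
    nlinarith [sq_nonneg (y i)]

lemma lamMin_le_quad (hA : A.IsHermitian) (x : Fin d → ℝ) :
    lamMin A * norm2 x ^ 2 ≤ x ⬝ᵥ A *ᵥ x := by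
  obtain ⟨y, hy1, hy2, _⟩ := exists_coords hA x
  rw [hy2, sq_norm2, ← hy1, Finset.mul_sum]
  exact Finset.sum_le_sum fun i _ => by
    have := lamMin_le_eig hA i
    nlinarith [sq_nonneg (y i)]

lemma lamMax_nonneg (hA : A.PosSemidef) [Nonempty (Fin d)] : 0 ≤ lamMax A :=
  le_trans (hA.eigenvalues_nonneg (Classical.arbitrary _)) (eig_le_lamMax hA.1 _)

lemma norm2_mulVec_le (hA : A.PosSemidef) [Nonempty (Fin d)] (x : Fin d → ℝ) :
    norm2 (A *ᵥ x) ≤ lamMax A * norm2 x := by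
  obtain ⟨y, hy1, _, hy3⟩ := exists_coords hA.1 x
  have key : norm2 (A *ᵥ x) ^ 2 ≤ (lamMax A * norm2 x) ^ 2 := by
    rw [sq_norm2, hy3, mul_pow, sq_norm2, ← hy1, Finset.mul_sum]
    exact Finset.sum_le_sum fun i _ => by
      have h1 := eig_le_lamMax hA.1 i
      have h2 := hA.eigenvalues_nonneg i
      have h3 : hA.1.eigenvalues i ^ 2 ≤ lamMax A ^ 2 := by nlinarith
      exact mul_le_mul_of_nonneg_right h3 (sq_nonneg _)
  nlinarith [norm2_nonneg (A *ᵥ x), norm2_nonneg x, lamMax_nonneg hA,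
    mul_nonneg (lamMax_nonneg hA) (norm2_nonneg x)]

lemma dotProduct_le_norm2 (u v : Fin d → ℝ) : u ⬝ᵥ v ≤ norm2 u * norm2 v := by
  have hcs := Finset.sum_mul_sq_le_sq_mul_sq Finset.univ u v
  have h2 : (u ⬝ᵥ v) ^ 2 ≤ (norm2 u * norm2 v) ^ 2 := by
    rw [mul_pow, sq_norm2, sq_norm2]; simpa [dotProduct] using hcs
  nlinarith [mul_nonneg (norm2_nonneg u) (norm2_nonneg v)]

end Bounds

lemma sq_norm2_restrict {n : ℕ} (S : Finset (Fin n)) (v : Fin n → ℝ) :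
    norm2 (restrict S v) ^ 2 = ∑ i ∈ S, v i ^ 2 := by
  classical
  rw [sq_norm2]
  simp [restrict, apply_ite (· ^ 2), Finset.sum_ite_mem]

lemma quad_gram {d n : ℕ} (X : Matrix (Fin d) (Fin n) ℝ) (S : Finset (Fin n))
    (u : Fin d → ℝ) :
    u ⬝ᵥ (gramOn X S) *ᵥ u = ∑ i ∈ S, (∑ a, X a i * u a) ^ 2 := by
  simp only [dotProduct, mulVec, gramOn, Finset.sum_mul, Finset.mul_sum, pow_two]
  have hswap : ∀ a : Fin d, (∑ b : Fin d, ∑ i ∈ S, u a * (X a i * X b i * u b))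
      = ∑ i ∈ S, ∑ b : Fin d, u a * (X a i * X b i * u b) := fun a => Finset.sum_comm
  simp only [hswap]
  rw [Finset.sum_comm]
  exact Finset.sum_congr rfl fun i _ => Finset.sum_congr rfl fun a _ =>
    Finset.sum_congr rfl fun b _ => by ring

lemma gram_posSemidef {d n : ℕ} (X : Matrix (Fin d) (Fin n) ℝ) (S : Finset (Fin n)) :
    (gramOn X S).PosSemidef := by
  refine PosSemidef.of_dotProduct_mulVec_nonneg ?_ ?_
  · show (gramOn X S)ᴴ = gramOn X S
    ext i j
    rw [conjTranspose_apply, star_trivial]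
    exact Finset.sum_congr rfl fun a _ => mul_comm _ _
  · intro x
    show (0:ℝ) ≤ x ⬝ᵥ (gramOn X S) *ᵥ x
    rw [quad_gram]
    positivity

theorem stmt9 {d n : ℕ} (k : ℕ) (X : Matrix (Fin d) (Fin n) ℝ)
    (M : Matrix (Fin d) (Fin d) ℝ) (hM : M.PosSemidef) (hXM : (X * Xᵀ + M).PosDef)
    (hMmax : 0 < lamMax M)
    (Λ : ℝ) (hΛ : 0 < Λ)
    (hSSS : ∀ S : Finset (Fin n), S.card = k → lamMax (gramOn X S) ≤ Λ)
    (wstar w₀ : Fin d → ℝ) (g : Fin n → ℝ)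
    (hg : g = (Xᵀ * (X * Xᵀ + M)⁻¹ * M).mulVec (wstar - w₀))
    (γ : ℝ) (hγ : 0 < γ) (ε : Fin n → ℝ)
    (hε : ∀ S : Finset (Fin n), S.card ≤ k →
      norm2 (restrict S ε)
        ≤ γ * sSup ((fun S' : Finset (Fin n) => norm2 (restrict S' g)) '' {S' | S'.card = k})) :
    (lamMin (X * Xᵀ + M) / (γ * Real.sqrt Λ * lamMax M)) *
        sSup ((fun S : Finset (Fin n) => norm2 (restrict S ε)) '' {S | S.card = k})
      ≤ norm2 (wstar - w₀) := by
  classical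
  by_cases hd0 : d = 0
  · exfalso
    have hE : IsEmpty (Fin d) := by subst hd0; exact Fin.isEmpty'
    have : lamMax M = 0 := by rw [lamMax, dif_pos hM.1]; exact Real.iSup_of_isEmpty _
    linarith
  haveI : Nonempty (Fin d) := ⟨⟨0, Nat.pos_of_ne_zero hd0⟩⟩
  set B := X * Xᵀ + M with hB
  have hBH : B.IsHermitian := hXM.1
  have hMH : M.IsHermitian := hM.1
  have hlmin : 0 < lamMin B := by
    obtain ⟨j, hj⟩ := Finite.exists_min hBH.eigenvalues
    have h1 : hBH.eigenvalues j ≤ lamMin B := by rw [lamMin, dif_pos hBH]; exact le_ciInf hj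
    exact lt_of_lt_of_le (hXM.eigenvalues_pos j) h1
  have hdet : IsUnit B.det := (isUnit_iff_ne_zero).mpr hXM.det_pos.ne'
  set Δ := wstar - w₀ with hΔ
  set u := (B⁻¹ * M) *ᵥ Δ with hudef
  have hgu : g = Xᵀ *ᵥ u := by
    rw [hg, Matrix.mul_assoc, ← mulVec_mulVec]
  set yv := M *ᵥ Δ with hyv
  have hu2 : u = B⁻¹ *ᵥ yv := by rw [hudef, hyv, mulVec_mulVec]
  have hBu : B *ᵥ u = yv := by
    rw [hu2, mulVec_mulVec, mul_nonsing_inv _ hdet, one_mulVec]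
  have hyvle : norm2 yv ≤ lamMax M * norm2 Δ := norm2_mulVec_le hM Δ
  have hule : norm2 u ≤ norm2 yv / lamMin B := by
    have h2 := lamMin_le_quad hBH u
    rw [hBu] at h2
    have h3 := dotProduct_le_norm2 u yv
    rcases eq_or_lt_of_le (norm2_nonneg u) with h0 | h0
    · rw [le_div_iff₀ hlmin, ← h0, zero_mul]; exact norm2_nonneg yv
    · rw [le_div_iff₀ hlmin]; nlinarith
  have hgb : ∀ S : Finset (Fin n), S.card = k →
      norm2 (restrict S g) ≤ Real.sqrt Λ * norm2 u := by
    intro S hS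
    have hq : norm2 (restrict S g) ^ 2 ≤ Λ * norm2 u ^ 2 := by
      rw [sq_norm2_restrict]
      have hgi : ∀ i ∈ S, g i ^ 2 = (∑ a, X a i * u a) ^ 2 := by
        intro i _
        rw [hgu]
        rfl
      rw [Finset.sum_congr rfl hgi, ← quad_gram]
      calc u ⬝ᵥ gramOn X S *ᵥ u ≤ lamMax (gramOn X S) * norm2 u ^ 2 :=
            quad_le_lamMax (gram_posSemidef X S).1 u
        _ ≤ Λ * norm2 u ^ 2 := mul_le_mul_of_nonneg_right (hSSS S hS) (sq_nonneg _)
    have h1 : (Real.sqrt Λ * norm2 u) ^ 2 = Λ * norm2 u ^ 2 := by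
      rw [mul_pow, Real.sq_sqrt hΛ.le]
    nlinarith [norm2_nonneg (restrict S g),
      mul_nonneg (Real.sqrt_nonneg Λ) (norm2_nonneg u)]
  set C : ℝ := Real.sqrt Λ * (lamMax M * norm2 Δ / lamMin B) with hC
  have hCnn : 0 ≤ C :=
    mul_nonneg (Real.sqrt_nonneg _)
      (div_nonneg (mul_nonneg hMmax.le (norm2_nonneg _)) hlmin.le)
  have hgsup : sSup ((fun S' : Finset (Fin n) => norm2 (restrict S' g)) '' {S' | S'.card = k})
      ≤ C := by
    apply Real.sSup_le _ hCnn
    rintro x ⟨S, hS, rfl⟩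
    calc norm2 (restrict S g) ≤ Real.sqrt Λ * norm2 u := hgb S hS
      _ ≤ C := by
          rw [hC]
          refine mul_le_mul_of_nonneg_left ?_ (Real.sqrt_nonneg _)
          calc norm2 u ≤ norm2 yv / lamMin B := hule
            _ ≤ lamMax M * norm2 Δ / lamMin B := by gcongr
  have hesup : sSup ((fun S : Finset (Fin n) => norm2 (restrict S ε)) '' {S | S.card = k})
      ≤ γ * C := by
    apply Real.sSup_le _ (mul_nonneg hγ.le hCnn)
    rintro x ⟨S, hS, rfl⟩
    exact (hε S (le_of_eq hS)).trans (mul_le_mul_of_nonneg_left hgsup hγ.le)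
  have hsq : (0:ℝ) < Real.sqrt Λ := Real.sqrt_pos.mpr hΛ
  have hcoef : 0 < lamMin B / (γ * Real.sqrt Λ * lamMax M) :=
    div_pos hlmin (mul_pos (mul_pos hγ hsq) hMmax)
  refine le_trans (mul_le_mul_of_nonneg_left hesup hcoef.le) (le_of_eq ?_)
  rw [hC]
  have h1 : lamMin B ≠ 0 := hlmin.ne'
  have h2 : γ ≠ 0 := hγ.ne'
  have h3 : Real.sqrt Λ ≠ 0 := hsq.ne'
  have h4 : lamMax M ≠ 0 := hMmax.ne'
  field_simp
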